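/- arXiv:1203.1809 — 2 statements merged into one kernel-verified Lean document; each statement's English description precedes it below -/
import Mathlib

section
/- In the public project problem with equal participation costs, for every agent i and every θ_{-i} ∈ [0,c]^{n−1}: the total VCG payment Σ_{k=1}^n VCG_k(θ'_i, θ_{-i}) is nonnegative for every θ'_i ∈ [0,c], and there exists θ'_i ∈ [0,c] for which it equals 0; hence inf_{θ'_i ∈ [0,c]} Σ_{k=1}^n VCG_k(θ'_i, θ_{-i}) = 0, and consequently the Bailey-Cavallo mechanism (which redistributes to each agent i the amount (1/n)·inf_{θ'_i} Σ_k VCG_k(θ'_i,θ_{-i})) coincides with the VCG mechanism. -/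
/-!
STATEMENT 15: Public project with equal participation costs: n ≥ 2 agents,
cost c > 0, types in [0,c],
  VCG_i(θ) = max{0, Σ_{j≠i}(θ_j − c/n)} − f(θ)·Σ_{j≠i}(θ_j − c/n),
f(θ) = 1 iff Σ θ_i ≥ c. For every agent i and every profile θ in the box:
(a) the total VCG payment Σ_k VCG_k(θ'_i, θ_{-i}) is nonnegative for every
θ'_i ∈ [0,c]; (b) it equals 0 for some θ'_i ∈ [0,c]; hence (c) its infimum
over θ'_i ∈ [0,c] is 0; consequently (d) the Bailey–Cavallo redistribution
(1/n)·inf equals 0, i.e. the BC mechanism coincides with VCG.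
(θ'_i, θ_{-i}) = Function.update θ i θ'_i.
-/

/-- VCG payment of agent `i` in the equal-cost public project with `N` agents
and cost `c`. -/
noncomputable def ppVCGi (N : ℕ) (c : ℝ) (i : Fin N) (θ : Fin N → ℝ) : ℝ :=
  max 0 (∑ j ∈ Finset.univ.erase i, (θ j - c / N)) -
    (if c ≤ ∑ j, θ j then 1 else 0) * ∑ j ∈ Finset.univ.erase i, (θ j - c / N)

/-!
Write `a = c / n` and let `S` be the sum of the other agents' reports. Agent `k`'s VCG payment
vanishes exactly when the efficient decision agrees with the one taken without `k`, and the
surplus without `k` is `(Σ θ - c) + (a - θ k)`. If `S + a ≥ c`, agent `i` reporting `c` makes the project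
go ahead and leaves every surplus nonnegative; otherwise reporting `0` cancels the project and
makes every surplus negative. Either way the total payment, a sum of nonnegative terms, is `0`.
-/

open Finset Function Set

lemma ppVCGi_nonneg (N : ℕ) (c : ℝ) (i : Fin N) (θ : Fin N → ℝ) :
    0 ≤ ppVCGi N c i θ := by
  unfold ppVCGi
  split_ifs
  · linarith [le_max_right 0 (∑ j ∈ univ.erase i, (θ j - c / N))]
  · linarith [le_max_left 0 (∑ j ∈ univ.erase i, (θ j - c / N))]

lemma sum_erase_sub_div_eq {N : ℕ} (c : ℝ) (k : Fin N) (θ : Fin N → ℝ) :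
    ∑ j ∈ univ.erase k, (θ j - c / N) = (∑ j, θ j - c) + (c / N - θ k) := by
  have hN : (N : ℝ) ≠ 0 := Nat.cast_ne_zero.mpr k.pos.ne'
  rw [sum_erase_eq_sub (mem_univ k), sum_sub_distrib, sum_const, card_univ, Fintype.card_fin,
    nsmul_eq_mul, mul_div_cancel₀ c hN]
  ring

lemma ppVCGi_eq_zero_of_le_sum {N : ℕ} {c : ℝ} {k : Fin N} {θ : Fin N → ℝ}
    (hgo : c ≤ ∑ j, θ j) (hk : θ k ≤ ∑ j, θ j - c + c / N) : ppVCGi N c k θ = 0 := by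
  have hsurplus : 0 ≤ ∑ j ∈ univ.erase k, (θ j - c / N) := by
    rw [sum_erase_sub_div_eq]; linarith
  rw [ppVCGi, if_pos hgo, max_eq_right hsurplus, one_mul, sub_self]

lemma ppVCGi_eq_zero_of_sum_lt {N : ℕ} {c : ℝ} {k : Fin N} {θ : Fin N → ℝ}
    (hstop : ∑ j, θ j < c) (hk : ∑ j, θ j - c + c / N ≤ θ k) : ppVCGi N c k θ = 0 := by
  have hsurplus : ∑ j ∈ univ.erase k, (θ j - c / N) ≤ 0 := by
    rw [sum_erase_sub_div_eq]; linarith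
  rw [ppVCGi, if_neg hstop.not_ge, max_eq_left hsurplus, zero_mul, sub_zero]

lemma sum_update_eq_add_sum_erase {N : ℕ} (θ : Fin N → ℝ) (i : Fin N) (x : ℝ) :
    ∑ j, update θ i x j = x + ∑ j ∈ univ.erase i, θ j := by
  rw [sum_update_of_mem (mem_univ i), ← erase_eq]

lemma exists_sum_ppVCGi_update_eq_zero {n : ℕ} {c : ℝ} (hc : 0 ≤ c) {θ : Fin n → ℝ}
    (hθ : ∀ j, 0 ≤ θ j) (i : Fin n) :
    ∃ x ∈ Icc 0 c, ∑ k, ppVCGi n c k (update θ i x) = 0 := by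
  set S := ∑ j ∈ univ.erase i, θ j
  have hS : 0 ≤ S := sum_nonneg fun j _ => hθ j
  have ha : 0 ≤ c / n := by positivity
  by_cases hcase : c ≤ S + c / n
  · refine ⟨c, ⟨hc, le_rfl⟩, sum_eq_zero fun k _ => ?_⟩
    apply ppVCGi_eq_zero_of_le_sum <;> rw [sum_update_eq_add_sum_erase]
    · linarith
    · rcases eq_or_ne k i with rfl | hki
      · rw [update_self]; linarith
      · have hθS : θ k ≤ S := single_le_sum (fun j _ => hθ j) (mem_erase.mpr ⟨hki, mem_univ k⟩)
        rw [update_of_ne hki]; linarith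
  · refine ⟨0, ⟨le_rfl, hc⟩, sum_eq_zero fun k _ => ?_⟩
    have hθ' : 0 ≤ update θ i 0 k := by
      rcases eq_or_ne k i with rfl | hki
      · rw [update_self]
      · rw [update_of_ne hki]; exact hθ k
    apply ppVCGi_eq_zero_of_sum_lt <;> rw [sum_update_eq_add_sum_erase] <;> linarith

theorem stmt_15_general {n : ℕ} (c : ℝ) :
    ∀ (i : Fin n) (θ : Fin n → ℝ), (∀ j, θ j ∈ Set.Icc 0 c) →
      (∀ x ∈ Set.Icc (0:ℝ) c,
        0 ≤ ∑ k, ppVCGi n c k (Function.update θ i x)) ∧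
      (∃ x ∈ Set.Icc (0:ℝ) c,
        ∑ k, ppVCGi n c k (Function.update θ i x) = 0) ∧
      sInf {y : ℝ | ∃ x ∈ Set.Icc (0:ℝ) c,
        y = ∑ k, ppVCGi n c k (Function.update θ i x)} = 0 ∧
      ppVCGi n c i θ -
        (1 / (n : ℝ)) * sInf {y : ℝ | ∃ x ∈ Set.Icc (0:ℝ) c,
          y = ∑ k, ppVCGi n c k (Function.update θ i x)} = ppVCGi n c i θ := by
  intro i θ hθ
  have hnonneg : ∀ x ∈ Icc (0:ℝ) c, 0 ≤ ∑ k, ppVCGi n c k (update θ i x) :=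
    fun x _ => sum_nonneg fun k _ => ppVCGi_nonneg n c k _
  obtain ⟨x₀, hx₀, hzero⟩ :=
    exists_sum_ppVCGi_update_eq_zero ((hθ i).1.trans (hθ i).2) (fun j => (hθ j).1) i
  have hinf : sInf {y : ℝ | ∃ x ∈ Icc (0:ℝ) c, y = ∑ k, ppVCGi n c k (update θ i x)} = 0 :=
    IsLeast.csInf_eq ⟨⟨x₀, hx₀, hzero.symm⟩, by rintro y ⟨x, hx, rfl⟩; exact hnonneg x hx⟩
  exact ⟨hnonneg, ⟨x₀, hx₀, hzero⟩, hinf, by rw [hinf, mul_zero, sub_zero]⟩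

theorem stmt_15 {n : ℕ} (hn : 2 ≤ n) (c : ℝ) (hc : 0 < c) :
    ∀ (i : Fin n) (θ : Fin n → ℝ), (∀ j, θ j ∈ Set.Icc 0 c) →
      (∀ x ∈ Set.Icc (0:ℝ) c,
        0 ≤ ∑ k, ppVCGi n c k (Function.update θ i x)) ∧
      (∃ x ∈ Set.Icc (0:ℝ) c,
        ∑ k, ppVCGi n c k (Function.update θ i x) = 0) ∧
      sInf {y : ℝ | ∃ x ∈ Set.Icc (0:ℝ) c,
        y = ∑ k, ppVCGi n c k (Function.update θ i x)} = 0 ∧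
      ppVCGi n c i θ -
        (1 / (n : ℝ)) * sInf {y : ℝ | ∃ x ∈ Set.Icc (0:ℝ) c,
          y = ∑ k, ppVCGi n c k (Function.update θ i x)} = ppVCGi n c i θ :=
  stmt_15_general c
end

section
/- In the public project problem with equal participation costs, for a pay-only Groves mechanism r = (r_1,…,r_n) the following are equivalent: (1) r is individually undominated among non-deficit Groves mechanisms; (2) r_i(θ_{-i}) = 0 for all i and θ_{-i}, i.e., r is the VCG mechanism; (3) r is collectively undominated among non-deficit Groves mechanisms. -/
namespace PublicProject

open Finset

section VCG

variable {N : ℕ} {c : ℝ} {θ : Fin N → ℝ}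

lemma sum_erase_sub_div (θ : Fin N → ℝ) (i : Fin N) :
    ∑ j ∈ univ.erase i, (θ j - c / N) = ∑ j, θ j - θ i - (c - c / N) := by
  have hN : (N : ℝ) ≠ 0 := Nat.cast_ne_zero.mpr (Fin.pos i).ne'
  rw [sum_sub_distrib, sum_erase_eq_sub (mem_univ i), sum_const, card_erase_of_mem (mem_univ i),
    card_univ, Fintype.card_fin, nsmul_eq_mul, Nat.cast_sub (Fin.pos i)]
  field_simp
  ring

lemma ppVCGi_nonneg (i : Fin N) (θ : Fin N → ℝ) : 0 ≤ ppVCGi N c i θ := by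
  unfold ppVCGi
  split_ifs
  · linarith [le_max_right 0 (∑ j ∈ univ.erase i, (θ j - c / N))]
  · simp

lemma ppVCGi_eq_zero_of_le {i : Fin N} (hS : c ≤ ∑ j, θ j)
    (hi : c - c / N ≤ ∑ j, θ j - θ i) : ppVCGi N c i θ = 0 := by
  rw [ppVCGi, sum_erase_sub_div, if_pos hS, max_eq_right (by linarith)]
  ring

lemma ppVCGi_eq_zero_of_lt {i : Fin N} (hS : ∑ j, θ j < c)
    (hi : ∑ j, θ j - θ i ≤ c - c / N) : ppVCGi N c i θ = 0 := by
  rw [ppVCGi, sum_erase_sub_div, if_neg hS.not_ge, max_eq_left (by linarith)]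
  ring

variable (hθ : ∀ j, θ j ∈ Set.Icc 0 c)
include hθ

lemma div_card_nonneg (i : Fin N) : 0 ≤ c / N :=
  div_nonneg ((hθ i).1.trans (hθ i).2) N.cast_nonneg

lemma sum_sub_nonneg (i : Fin N) : 0 ≤ ∑ j, θ j - θ i := by
  rw [← sum_erase_eq_sub (mem_univ i)]
  exact sum_nonneg fun j _ => (hθ j).1

lemma le_sum_sub_of_ne {i m : Fin N} (h : m ≠ i) : θ m ≤ ∑ j, θ j - θ i := by
  rw [← sum_erase_eq_sub (mem_univ i)]
  exact single_le_sum (fun j _ => (hθ j).1) (mem_erase.2 ⟨h, mem_univ m⟩)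

lemma ppVCGi_eq_zero_of_eq_of_le {k : Fin N} (hk : θ k = c)
    (h : c - c / N ≤ ∑ j, θ j - θ k) (i : Fin N) : ppVCGi N c i θ = 0 := by
  have hS : c ≤ ∑ j, θ j := by linarith [sum_sub_nonneg hθ k]
  refine ppVCGi_eq_zero_of_le hS ?_
  rcases eq_or_ne i k with rfl | hik
  · exact h
  · have := div_card_nonneg hθ k
    linarith [le_sum_sub_of_ne hθ hik.symm]

lemma ppVCGi_eq_zero_of_two_eq {j k : Fin N} (hjk : j ≠ k) (hj : θ j = c) (hk : θ k = c)
    (i : Fin N) : ppVCGi N c i θ = 0 := by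
  refine ppVCGi_eq_zero_of_eq_of_le hθ hk ?_ i
  have := div_card_nonneg hθ k
  linarith [le_sum_sub_of_ne hθ hjk]

lemma ppVCGi_eq_zero_of_sum_lt (h : ∑ j, θ j < c - c / N) (i : Fin N) :
    ppVCGi N c i θ = 0 := by
  have := div_card_nonneg hθ i
  exact ppVCGi_eq_zero_of_lt (by linarith) (by linarith [(hθ i).1])

end VCG

/-- Each `u i` ignores coordinate `i`, so toggling `i` in or out of `A` pairs off the terms. -/
lemma sum_neg_one_pow_mul_sum_piecewise {n : ℕ} {β : Type*} (u : Fin (n + 1) → (Fin n → β) → ℝ)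
    (θ θ' : Fin (n + 1) → β) :
    ∑ A : Finset (Fin (n + 1)), (-1) ^ #A * ∑ i, u i (A.piecewise θ' θ ∘ i.succAbove) = 0 := by
  simp_rw [mul_sum]
  rw [sum_comm]
  refine sum_eq_zero fun i _ => ?_
  rw [← powerset_univ, ← insert_erase (mem_univ i), sum_powerset_insert (notMem_erase i _),
    ← sum_add_distrib]
  refine sum_eq_zero fun B hB => ?_
  have hiB : i ∉ B := fun h => notMem_erase i _ (mem_powerset.1 hB h)
  have hpiece : (insert i B).piecewise θ' θ ∘ i.succAbove = B.piecewise θ' θ ∘ i.succAbove := by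
    funext k
    simp [Fin.succAbove_ne i k]
  rw [card_insert_of_notMem hiB, hpiece, pow_succ]
  ring

lemma piecewise_mem_Icc {N : ℕ} {c : ℝ} {θ θ' : Fin N → ℝ} (A : Finset (Fin N))
    (hθ' : ∀ j, θ' j ∈ Set.Icc 0 c) (hθ : ∀ j, θ j ∈ Set.Icc 0 c) :
    ∀ j, A.piecewise θ' θ j ∈ Set.Icc 0 c :=
  fun j => A.piecewise_cases θ' θ (· ∈ Set.Icc 0 c) (hθ' j) (hθ j)

section Undominated

variable {N : ℕ} {c : ℝ} {U : (Fin N → ℝ) → ℝ}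
  (hU : ∀ θ θ' : Fin N → ℝ, ∑ A : Finset (Fin N), (-1) ^ #A * U (A.piecewise θ' θ) = 0)
  (h0 : ∀ θ : Fin N → ℝ, (∀ j, θ j ∈ Set.Icc 0 c) → 0 ≤ U θ)
  (hZ : ∀ θ : Fin N → ℝ, (∀ j, θ j ∈ Set.Icc 0 c) → (∀ i, ppVCGi N c i θ = 0) → U θ = 0)
  {θ : Fin N → ℝ} (hθ : ∀ j, θ j ∈ Set.Icc 0 c)
include hU h0 hZ hθ

lemma eq_zero_of_eq_of_sum_sub_lt {k : Fin N} (hk : θ k = c)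
    (h : ∑ j, θ j - θ k < c - c / N) : U θ = 0 := by
  set θ' := Function.update (fun _ => c) k 0
  have hθ' : ∀ j, θ' j ∈ Set.Icc 0 c := by
    intro j
    rcases eq_or_ne j k with rfl | hjk
    · simpa [θ'] using (hθ j).1.trans (hθ j).2
    · simpa [θ', hjk] using (hθ j).1.trans (hθ j).2
  have hmix (A : Finset (Fin N)) := piecewise_mem_Icc A hθ' hθ
  have hmix_eq {A : Finset (Fin N)} {j : Fin N} (hj : j ∈ A.erase k) :
      A.piecewise θ' θ j = c := by
    simp [θ', mem_of_mem_erase hj, ne_of_mem_erase hj]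
  -- only `A = {k, m}` may owe payments, and it enters with sign `+`
  have hterm : ∀ A ∈ univ.erase ∅, 0 ≤ (-1) ^ #A * U (A.piecewise θ' θ) := by
    intro A hA
    have hA : A.Nonempty := nonempty_iff_ne_empty.2 (ne_of_mem_erase hA)
    obtain h1 | h2 | h3 : #A = 1 ∨ #A = 2 ∨ 3 ≤ #A := by have := hA.card_pos; omega
    · obtain ⟨a, rfl⟩ := card_eq_one.1 h1
      rcases eq_or_ne a k with rfl | hak
      · have hsum : ∑ j, ({a} : Finset (Fin N)).piecewise θ' θ j = ∑ j, θ j - θ a := by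
          rw [piecewise_singleton, sum_update_of_mem (mem_univ a), sdiff_singleton_eq_erase,
            sum_erase_eq_sub (mem_univ a)]
          simp [θ']
        rw [hZ _ (hmix _) (ppVCGi_eq_zero_of_sum_lt (hmix _) (hsum ▸ h)), mul_zero]
      · have ha : ({a} : Finset (Fin N)).piecewise θ' θ a = c :=
          hmix_eq (mem_erase.2 ⟨hak, mem_singleton_self a⟩)
        have hk' : ({a} : Finset (Fin N)).piecewise θ' θ k = c := by simp [hak.symm, hk]
        rw [hZ _ (hmix _) (ppVCGi_eq_zero_of_two_eq (hmix _) hak ha hk'), mul_zero]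
    · simpa [h2] using h0 _ (hmix A)
    · have : 1 < #(A.erase k) := by have := pred_card_le_card_erase (s := A) (a := k); omega
      obtain ⟨a, ha, b, hb, hab⟩ := one_lt_card.1 this
      rw [hZ _ (hmix _) (ppVCGi_eq_zero_of_two_eq (hmix _) hab (hmix_eq ha) (hmix_eq hb)),
        mul_zero]
  have hsum := hU θ θ'
  rw [← add_sum_erase _ _ (mem_univ ∅), card_empty, pow_zero, one_mul, piecewise_empty] at hsum
  linarith [sum_nonneg hterm, h0 θ hθ]

lemma eq_zero_of_apply_eq {k : Fin N} (hk : θ k = c) : U θ = 0 := by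
  by_cases h : c - c / N ≤ ∑ j, θ j - θ k
  · exact hZ θ hθ (ppVCGi_eq_zero_of_eq_of_le hθ hk h)
  · exact eq_zero_of_eq_of_sum_sub_lt hU h0 hZ hθ hk (not_le.1 h)

theorem eq_zero_on_box : U θ = 0 := by
  have hsum := hU θ (fun _ => c)
  rwa [sum_eq_single ∅ ?_ (by simp), card_empty, pow_zero, one_mul, piecewise_empty] at hsum
  intro A _ hA
  obtain ⟨k, hk⟩ := nonempty_iff_ne_empty.2 hA
  have hc : ∀ j : Fin N, c ∈ Set.Icc 0 c := fun j => ⟨(hθ j).1.trans (hθ j).2, le_rfl⟩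
  have hmix := piecewise_mem_Icc A hc hθ
  rw [eq_zero_of_apply_eq hU h0 hZ hmix (k := k) (by simp [hk]), mul_zero]

end Undominated

section Mechanisms

variable {n : ℕ} {c : ℝ}

def IsPayOnly (c : ℝ) (r : Fin (n + 1) → (Fin n → ℝ) → ℝ) : Prop :=
  ∀ (i : Fin (n + 1)) (θ : Fin (n + 1) → ℝ), (∀ j, θ j ∈ Set.Icc 0 c) →
    r i (θ ∘ i.succAbove) ≤ ppVCGi (n + 1) c i θ

def IsNonDeficit (c : ℝ) (r : Fin (n + 1) → (Fin n → ℝ) → ℝ) : Prop :=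
  ∀ θ : Fin (n + 1) → ℝ, (∀ i, θ i ∈ Set.Icc 0 c) →
    ∑ i : Fin (n + 1), r i (θ ∘ i.succAbove) ≤ ∑ i : Fin (n + 1), ppVCGi (n + 1) c i θ

def IndividuallyDominates (c : ℝ) (r' r : Fin (n + 1) → (Fin n → ℝ) → ℝ) : Prop :=
  (∀ (i : Fin (n + 1)) (θ : Fin (n + 1) → ℝ), (∀ j, θ j ∈ Set.Icc 0 c) →
      r i (θ ∘ i.succAbove) ≤ r' i (θ ∘ i.succAbove)) ∧
    ∃ (i : Fin (n + 1)) (θ : Fin (n + 1) → ℝ), (∀ j, θ j ∈ Set.Icc 0 c) ∧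
      r i (θ ∘ i.succAbove) < r' i (θ ∘ i.succAbove)

def CollectivelyDominates (c : ℝ) (r' r : Fin (n + 1) → (Fin n → ℝ) → ℝ) : Prop :=
  (∀ θ : Fin (n + 1) → ℝ, (∀ i, θ i ∈ Set.Icc 0 c) →
      ∑ i : Fin (n + 1), r i (θ ∘ i.succAbove) ≤ ∑ i : Fin (n + 1), r' i (θ ∘ i.succAbove)) ∧
    ∃ θ : Fin (n + 1) → ℝ, (∀ i, θ i ∈ Set.Icc 0 c) ∧
      ∑ i : Fin (n + 1), r i (θ ∘ i.succAbove) < ∑ i : Fin (n + 1), r' i (θ ∘ i.succAbove)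

def IsVCG (c : ℝ) (r : Fin (n + 1) → (Fin n → ℝ) → ℝ) : Prop :=
  ∀ (i : Fin (n + 1)) (x : Fin n → ℝ), (∀ j, x j ∈ Set.Icc 0 c) → r i x = 0

/-- The missing type is `c` if the others already cover `c - c / (n + 1)`, and `0` otherwise. -/
lemma exists_extension_ppVCGi_eq_zero (hc : 0 ≤ c) (i : Fin (n + 1)) {x : Fin n → ℝ}
    (hx : ∀ j, x j ∈ Set.Icc 0 c) :
    ∃ θ : Fin (n + 1) → ℝ, (∀ j, θ j ∈ Set.Icc 0 c) ∧ θ ∘ i.succAbove = x ∧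
      ppVCGi (n + 1) c i θ = 0 := by
  have hbox : ∀ t ∈ Set.Icc 0 c, ∀ j, (i.insertNth t x : Fin (n + 1) → ℝ) j ∈ Set.Icc 0 c :=
    fun t ht => (Fin.forall_iff_succAbove i).2 ⟨by simpa using ht, fun k => by simpa using hx k⟩
  have hsum (t : ℝ) : ∑ j, (i.insertNth t x : Fin (n + 1) → ℝ) j = t + ∑ k, x k := by
    simp [Fin.sum_univ_succAbove _ i]
  by_cases h : c - c / (n + 1 : ℕ) ≤ ∑ k, x k
  · refine ⟨i.insertNth c x, hbox c ⟨hc, le_rfl⟩, Fin.insertNth_comp_succAbove _ _ _, ?_⟩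
    exact ppVCGi_eq_zero_of_eq_of_le (hbox c ⟨hc, le_rfl⟩) (k := i) (by simp)
      (by rw [hsum, Fin.insertNth_apply_same, add_sub_cancel_left]; exact h) i
  · refine ⟨i.insertNth 0 x, hbox 0 ⟨le_rfl, hc⟩, Fin.insertNth_comp_succAbove _ _ _, ?_⟩
    exact ppVCGi_eq_zero_of_sum_lt (hbox 0 ⟨le_rfl, hc⟩)
      (by rw [hsum, zero_add]; exact not_le.1 h) i

lemma IsPayOnly.nonpos {r : Fin (n + 1) → (Fin n → ℝ) → ℝ} (hr : IsPayOnly c r) (hc : 0 ≤ c)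
    (i : Fin (n + 1)) {x : Fin n → ℝ} (hx : ∀ j, x j ∈ Set.Icc 0 c) : r i x ≤ 0 := by
  obtain ⟨θ, hθ, rfl, hzero⟩ := exists_extension_ppVCGi_eq_zero hc i hx
  exact hzero ▸ hr i θ hθ

lemma IndividuallyDominates.collectivelyDominates {r' r : Fin (n + 1) → (Fin n → ℝ) → ℝ}
    (h : IndividuallyDominates c r' r) : CollectivelyDominates c r' r := by
  obtain ⟨hle, i, θ, hθ, hlt⟩ := h
  exact ⟨fun θ hθ => sum_le_sum fun i _ => hle i θ hθ,
    θ, hθ, sum_lt_sum (fun i _ => hle i θ hθ) ⟨i, mem_univ i, hlt⟩⟩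

lemma IsPayOnly.isVCG_of_not_dominated {r : Fin (n + 1) → (Fin n → ℝ) → ℝ} (hr : IsPayOnly c r)
    (hc : 0 ≤ c) (h : ¬∃ r', IsNonDeficit c r' ∧ IndividuallyDominates c r' r) : IsVCG c r := by
  intro i x hx
  by_contra hne
  obtain ⟨θ, hθ, rfl, -⟩ := exists_extension_ppVCGi_eq_zero hc i hx
  refine h ⟨fun _ _ => 0, fun θ _ => ?_, fun i θ hθ => hr.nonpos hc i fun j => hθ _, i, θ, hθ,
    (hr.nonpos hc i fun j => hθ _).lt_of_ne hne⟩
  simpa using sum_nonneg fun i _ => ppVCGi_nonneg i θ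

lemma IsVCG.not_collectivelyDominated {r : Fin (n + 1) → (Fin n → ℝ) → ℝ} (hr : IsVCG c r) :
    ¬∃ r', IsNonDeficit c r' ∧ CollectivelyDominates c r' r := by
  rintro ⟨r', hnd, hle, θ, hθ, hlt⟩
  have hr0 : ∀ θ : Fin (n + 1) → ℝ, (∀ j, θ j ∈ Set.Icc 0 c) →
      ∑ i : Fin (n + 1), r i (θ ∘ i.succAbove) = 0 :=
    fun θ hθ => sum_eq_zero fun i _ => hr i _ fun j => hθ _
  have h0 : ∀ θ : Fin (n + 1) → ℝ, (∀ j, θ j ∈ Set.Icc 0 c) →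
      0 ≤ ∑ i : Fin (n + 1), r' i (θ ∘ i.succAbove) :=
    fun θ hθ => hr0 θ hθ ▸ hle θ hθ
  have hZ : ∀ θ : Fin (n + 1) → ℝ, (∀ j, θ j ∈ Set.Icc 0 c) →
      (∀ i, ppVCGi (n + 1) c i θ = 0) → ∑ i : Fin (n + 1), r' i (θ ∘ i.succAbove) = 0 :=
    fun θ hθ hvcg => le_antisymm (by simpa [hvcg] using hnd θ hθ) (h0 θ hθ)
  have := eq_zero_on_box (fun θ θ' => sum_neg_one_pow_mul_sum_piecewise r' θ θ') h0 hZ hθ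
  linarith [hr0 θ hθ]

end Mechanisms

end PublicProject

theorem stmt_18_general {n : ℕ} (c : ℝ) (hc : 0 < c)
    (r : Fin (n+1) → (Fin n → ℝ) → ℝ)
    -- r is pay-only
    (hpay : ∀ (i : Fin (n+1)) (θ : Fin (n+1) → ℝ), (∀ j, θ j ∈ Set.Icc 0 c) →
      r i (θ ∘ i.succAbove) ≤ ppVCGi (n+1) c i θ) :
    -- (1) ↔ (2)
    ((¬ ∃ r' : Fin (n+1) → (Fin n → ℝ) → ℝ,
        (∀ θ : Fin (n+1) → ℝ, (∀ i, θ i ∈ Set.Icc 0 c) →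
          ∑ i : Fin (n+1), r' i (θ ∘ i.succAbove) ≤
            ∑ i : Fin (n+1), ppVCGi (n+1) c i θ) ∧
        (∀ (i : Fin (n+1)) (θ : Fin (n+1) → ℝ), (∀ j, θ j ∈ Set.Icc 0 c) →
          r i (θ ∘ i.succAbove) ≤ r' i (θ ∘ i.succAbove)) ∧
        (∃ (i : Fin (n+1)) (θ : Fin (n+1) → ℝ), (∀ j, θ j ∈ Set.Icc 0 c) ∧
          r i (θ ∘ i.succAbove) < r' i (θ ∘ i.succAbove))) ↔
      (∀ (i : Fin (n+1)) (x : Fin n → ℝ),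
        (∀ j, x j ∈ Set.Icc 0 c) → r i x = 0)) ∧
    -- (2) ↔ (3)
    ((∀ (i : Fin (n+1)) (x : Fin n → ℝ),
        (∀ j, x j ∈ Set.Icc 0 c) → r i x = 0) ↔
      (¬ ∃ r' : Fin (n+1) → (Fin n → ℝ) → ℝ,
        (∀ θ : Fin (n+1) → ℝ, (∀ i, θ i ∈ Set.Icc 0 c) →
          ∑ i : Fin (n+1), r' i (θ ∘ i.succAbove) ≤
            ∑ i : Fin (n+1), ppVCGi (n+1) c i θ) ∧
        (∀ θ : Fin (n+1) → ℝ, (∀ i, θ i ∈ Set.Icc 0 c) →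
          ∑ i : Fin (n+1), r i (θ ∘ i.succAbove) ≤
            ∑ i : Fin (n+1), r' i (θ ∘ i.succAbove)) ∧
        (∃ θ : Fin (n+1) → ℝ, (∀ i, θ i ∈ Set.Icc 0 c) ∧
          ∑ i : Fin (n+1), r i (θ ∘ i.succAbove) <
            ∑ i : Fin (n+1), r' i (θ ∘ i.succAbove)))) := by
  have h12 : (¬∃ r', PublicProject.IsNonDeficit c r' ∧ PublicProject.IndividuallyDominates c r' r) →
      PublicProject.IsVCG c r :=
    PublicProject.IsPayOnly.isVCG_of_not_dominated hpay hc.le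
  have h23 : PublicProject.IsVCG c r →
      ¬∃ r', PublicProject.IsNonDeficit c r' ∧ PublicProject.CollectivelyDominates c r' r :=
    PublicProject.IsVCG.not_collectivelyDominated
  have h31 : (∃ r', PublicProject.IsNonDeficit c r' ∧ PublicProject.IndividuallyDominates c r' r) →
      ∃ r', PublicProject.IsNonDeficit c r' ∧ PublicProject.CollectivelyDominates c r' r :=
    fun ⟨r', hnd, hdom⟩ => ⟨r', hnd, hdom.collectivelyDominates⟩
  exact ⟨⟨h12, fun h2 h1 => h23 h2 (h31 h1)⟩, h23, fun h3 => h12 (mt h31 h3)⟩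

theorem stmt_18 {n : ℕ} (hn : 1 ≤ n) (c : ℝ) (hc : 0 < c)
    (r : Fin (n+1) → (Fin n → ℝ) → ℝ)
    -- r is pay-only
    (hpay : ∀ (i : Fin (n+1)) (θ : Fin (n+1) → ℝ), (∀ j, θ j ∈ Set.Icc 0 c) →
      r i (θ ∘ i.succAbove) ≤ ppVCGi (n+1) c i θ) :
    -- (1) ↔ (2)
    ((¬ ∃ r' : Fin (n+1) → (Fin n → ℝ) → ℝ,
        (∀ θ : Fin (n+1) → ℝ, (∀ i, θ i ∈ Set.Icc 0 c) →
          ∑ i : Fin (n+1), r' i (θ ∘ i.succAbove) ≤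
            ∑ i : Fin (n+1), ppVCGi (n+1) c i θ) ∧
        (∀ (i : Fin (n+1)) (θ : Fin (n+1) → ℝ), (∀ j, θ j ∈ Set.Icc 0 c) →
          r i (θ ∘ i.succAbove) ≤ r' i (θ ∘ i.succAbove)) ∧
        (∃ (i : Fin (n+1)) (θ : Fin (n+1) → ℝ), (∀ j, θ j ∈ Set.Icc 0 c) ∧
          r i (θ ∘ i.succAbove) < r' i (θ ∘ i.succAbove))) ↔
      (∀ (i : Fin (n+1)) (x : Fin n → ℝ),
        (∀ j, x j ∈ Set.Icc 0 c) → r i x = 0)) ∧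
    -- (2) ↔ (3)
    ((∀ (i : Fin (n+1)) (x : Fin n → ℝ),
        (∀ j, x j ∈ Set.Icc 0 c) → r i x = 0) ↔
      (¬ ∃ r' : Fin (n+1) → (Fin n → ℝ) → ℝ,
        (∀ θ : Fin (n+1) → ℝ, (∀ i, θ i ∈ Set.Icc 0 c) →
          ∑ i : Fin (n+1), r' i (θ ∘ i.succAbove) ≤
            ∑ i : Fin (n+1), ppVCGi (n+1) c i θ) ∧
        (∀ θ : Fin (n+1) → ℝ, (∀ i, θ i ∈ Set.Icc 0 c) →
          ∑ i : Fin (n+1), r i (θ ∘ i.succAbove) ≤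
            ∑ i : Fin (n+1), r' i (θ ∘ i.succAbove)) ∧
        (∃ θ : Fin (n+1) → ℝ, (∀ i, θ i ∈ Set.Icc 0 c) ∧
          ∑ i : Fin (n+1), r i (θ ∘ i.succAbove) <
            ∑ i : Fin (n+1), r' i (θ ∘ i.succAbove)))) :=
  stmt_18_general c hc r hpay
end
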